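/- Modified greedy for knapsack is a 1/2-approximation: running greedy-by-density and then comparing with the single most valuable item that fits, the better of the two solutions has value at least OPT/2. -/

import Mathlib

/-- The set chosen by the greedy algorithm that processes items in index order
(assumed sorted by nonincreasing density) and adds each item if it still fits. -/
noncomputable def greedySet (n : ℕ) (D : Fin n → ℝ) (W : ℝ) : Finset (Fin n) :=
  (List.finRange n).foldl
    (fun S i => if ∑ j ∈ insert i S, D j ≤ W then insert i S else S) ∅

/-!
Let `k` be the first item that greedy rejects (if there is none, greedy is optimal). Just before
`k`, greedy holds the whole prefix `P = {i | i < k}`, and `P ∪ {k}` overflows the knapsack. With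
`ρ = v k / D k`, every item of `P` has density at least `ρ` and every item outside `P` at most `ρ`,
so for any feasible `T` the exchange bound `∑_T (v - ρ D) ≤ ∑_P (v - ρ D)` gives
`∑_T v ≤ ∑_P v + ρ (W - ∑_P D) < ∑_P v + v k`. Hence `OPT ≤ G + v_max ≤ 2 max G v_max`.
-/

open Finset

noncomputable def greedyStep {n : ℕ} (D : Fin n → ℝ) (W : ℝ) (S : Finset (Fin n)) (i : Fin n) :
    Finset (Fin n) :=
  if ∑ j ∈ insert i S, D j ≤ W then insert i S else S

section Foldl

variable {α : Type*} {f : Finset α → α → Finset α}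

theorem subset_foldl_of_subset_step (hf : ∀ S i, S ⊆ f S i) (l : List α) (S : Finset α) :
    S ⊆ l.foldl f S := by
  induction l generalizing S with
  | nil => rfl
  | cons a l ih => exact (hf S a).trans (ih _)

theorem foldl_subset_union_toFinset [DecidableEq α] (hf : ∀ S i, f S i ⊆ insert i S) (l : List α)
    (S : Finset α) : l.foldl f S ⊆ S ∪ l.toFinset := by
  induction l generalizing S with
  | nil => simp
  | cons a l ih =>
    refine (ih _).trans (union_subset_union (hf S a) le_rfl) |>.trans ?_
    intro x
    simp only [mem_union, mem_insert, List.toFinset_cons]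
    tauto

end Foldl

theorem sum_le_sum_add_mul_sub_sum {ι R : Type*} [DecidableEq ι] [CommRing R] [LinearOrder R]
    [IsStrictOrderedRing R] {v D : ι → R} {ρ : R} {P T : Finset ι}
    (hP : ∀ i ∈ P \ T, ρ * D i ≤ v i) (hT : ∀ i ∈ T \ P, v i ≤ ρ * D i) :
    ∑ i ∈ T, v i ≤ ∑ i ∈ P, v i + ρ * (∑ i ∈ T, D i - ∑ i ∈ P, D i) := by
  have key : ∑ i ∈ T, (v i - ρ * D i) ≤ ∑ i ∈ P, (v i - ρ * D i) :=
    sum_sdiff_le_sum_sdiff.mp <| (sum_nonpos fun i hi => sub_nonpos.mpr (hT i hi)).trans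
      (sum_nonneg fun i hi => sub_nonneg.mpr (hP i hi))
  simp only [sum_sub_distrib, ← mul_sum] at key
  linarith

section Greedy

variable {n : ℕ} (D : Fin n → ℝ) (W : ℝ)

theorem greedySet_eq_foldl : greedySet n D W = (List.finRange n).foldl (greedyStep D W) ∅ := rfl

theorem subset_greedyStep (S : Finset (Fin n)) (i : Fin n) : S ⊆ greedyStep D W S i := by
  unfold greedyStep; split_ifs
  · exact subset_insert _ _
  · rfl

theorem greedyStep_subset_insert (S : Finset (Fin n)) (i : Fin n) :
    greedyStep D W S i ⊆ insert i S := by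
  unfold greedyStep; split_ifs
  · rfl
  · exact subset_insert _ _

-- Greedy only adds the item being processed, so its final set below `k` is its state at `k`.
theorem lt_sum_filter_lt_greedySet_add {k : Fin n} (hk : k ∉ greedySet n D W) :
    W < ∑ i ∈ (greedySet n D W).filter (· < k), D i + D k := by
  set P := ((List.finRange n).take k).foldl (greedyStep D W) ∅
  have hsplit : greedySet n D W =
      ((List.finRange n).drop (k + 1)).foldl (greedyStep D W) (greedyStep D W P k) := by
    have hlist : List.finRange n =
        (List.finRange n).take k ++ k :: (List.finRange n).drop (k + 1) := by
      conv_lhs => rw [← List.take_append_drop k.val (List.finRange n),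
        List.drop_eq_getElem_cons (by simp)]
      simp
    conv_lhs => rw [greedySet_eq_foldl, hlist]
    rw [List.foldl_append, List.foldl_cons]
  have hP_lt : ∀ i ∈ P, i < k := by
    intro i hi
    have := foldl_subset_union_toFinset (greedyStep_subset_insert D W) _ _ hi
    simp only [empty_union, List.mem_toFinset, List.mem_take_iff_getElem] at this
    obtain ⟨j, hj, rfl⟩ := this
    simp only [List.length_finRange, lt_min_iff] at hj
    exact Fin.lt_def.mpr (by simp [hj.1])
  have hP_sub : P ⊆ greedySet n D W := (subset_greedyStep D W P k).trans <|
    hsplit ▸ subset_foldl_of_subset_step (subset_greedyStep D W) _ _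
  have hfilter : (greedySet n D W).filter (· < k) = P := by
    refine subset_antisymm (fun i hi => ?_) (fun i hi => mem_filter.mpr ⟨hP_sub hi, hP_lt i hi⟩)
    obtain ⟨hiG, hik⟩ := mem_filter.mp hi
    rw [hsplit] at hiG
    have := foldl_subset_union_toFinset (greedyStep_subset_insert D W) _ _ hiG
    simp only [mem_union, List.mem_toFinset, List.mem_drop_iff_getElem] at this
    rcases this with h | ⟨j, hj, rfl⟩
    · exact (mem_insert.mp (greedyStep_subset_insert D W P k h)).resolve_left hik.ne
    · refine absurd hik (not_lt.mpr (Fin.le_def.mpr ?_))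
      simp only [List.getElem_finRange, Fin.cast_mk]
      omega
  have hkP : k ∉ P := fun h => lt_irrefl k (hP_lt k h)
  rw [hfilter, add_comm, ← sum_insert hkP]
  by_contra hfit
  refine hk (hsplit ▸ subset_foldl_of_subset_step (subset_greedyStep D W) _ _ ?_)
  simp [greedyStep, not_lt.mp hfit]

theorem sum_le_sum_greedySet_add {v : Fin n → ℝ} (hv : ∀ i, 0 ≤ v i) (hD : ∀ i, 0 < D i)
    (hsorted : ∀ i j : Fin n, i ≤ j → v j / D j ≤ v i / D i)
    {k : Fin n} (hk : k ∉ greedySet n D W) (hmin : ∀ i < k, i ∈ greedySet n D W)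
    {T : Finset (Fin n)} (hT : ∑ i ∈ T, D i ≤ W) :
    ∑ i ∈ T, v i ≤ ∑ i ∈ greedySet n D W, v i + v k := by
  set P := (greedySet n D W).filter (· < k)
  set ρ := v k / D k
  have hvk : ρ * D k = v k := div_mul_cancel₀ _ (hD k).ne'
  have hdense : ∀ i ∈ P \ T, ρ * D i ≤ v i := fun i hi =>
    (le_div_iff₀ (hD i)).mp (hsorted i k (mem_filter.mp (mem_sdiff.mp hi).1).2.le)
  have hsparse : ∀ i ∈ T \ P, v i ≤ ρ * D i := fun i hi =>
    have hki : k ≤ i := not_lt.mp fun hik =>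
      (mem_sdiff.mp hi).2 (mem_filter.mpr ⟨hmin i hik, hik⟩)
    (div_le_iff₀ (hD i)).mp (hsorted k i hki)
  have hPG : ∑ i ∈ P, v i ≤ ∑ i ∈ greedySet n D W, v i :=
    sum_le_sum_of_subset_of_nonneg (filter_subset _ _) fun i _ _ => hv i
  have hoverflow := lt_sum_filter_lt_greedySet_add D W hk
  calc ∑ i ∈ T, v i ≤ ∑ i ∈ P, v i + ρ * (∑ i ∈ T, D i - ∑ i ∈ P, D i) :=
        sum_le_sum_add_mul_sub_sum hdense hsparse
    _ ≤ ∑ i ∈ P, v i + ρ * D k := by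
        gcongr
        · exact div_nonneg (hv k) (hD k).le
        · linarith
    _ ≤ ∑ i ∈ greedySet n D W, v i + v k := by linarith

end Greedy

theorem stmt_18_general (n : ℕ) (hn : 0 < n) (v D : Fin n → ℝ) (W : ℝ)
    (hv : ∀ i, 0 < v i) (hD : ∀ i, 0 < D i ∧ D i ≤ W)
    (hsorted : ∀ i j : Fin n, i ≤ j → v j / D j ≤ v i / D i)
    (OPT : ℝ)
    (hOPT : IsGreatest {x : ℝ | ∃ S : Finset (Fin n),
      (∑ i ∈ S, D i ≤ W) ∧ x = ∑ i ∈ S, v i} OPT) :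
    OPT / 2 ≤
      max (∑ i ∈ greedySet n D W, v i)
        (Finset.univ.sup' (Finset.univ_nonempty_iff.mpr ⟨⟨0, hn⟩⟩) v) := by
  obtain ⟨⟨T, hT, rfl⟩, -⟩ := hOPT
  set vmax := univ.sup' (univ_nonempty_iff.mpr ⟨⟨0, hn⟩⟩) v
  have hvmax : ∀ k, v k ≤ vmax := fun k => le_sup' v (mem_univ k)
  by_cases hall : ∀ i, i ∈ greedySet n D W
  · have hTG : ∑ i ∈ T, v i ≤ ∑ i ∈ greedySet n D W, v i :=
      sum_le_sum_of_subset_of_nonneg (fun i _ => hall i) fun i _ _ => (hv i).le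
    have hG_nonneg : 0 ≤ ∑ i ∈ greedySet n D W, v i := sum_nonneg fun i _ => (hv i).le
    linarith [le_max_left (∑ i ∈ greedySet n D W, v i) vmax]
  · obtain ⟨k, hk, hmin⟩ := WellFounded.has_min wellFounded_lt {i | i ∉ greedySet n D W}
      (not_forall.mp hall)
    have hTk := sum_le_sum_greedySet_add D W (fun i => (hv i).le) (fun i => (hD i).1) hsorted hk
      (fun i hik => not_not.mp fun hi => hmin i hi hik) hT
    linarith [hvmax k, le_max_left (∑ i ∈ greedySet n D W, v i) vmax,
      le_max_right (∑ i ∈ greedySet n D W, v i) vmax]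

theorem stmt_18 (n : ℕ) (hn : 0 < n) (v D : Fin n → ℝ) (W : ℝ) (hW : 0 < W)
    (hv : ∀ i, 0 < v i) (hD : ∀ i, 0 < D i ∧ D i ≤ W)
    (hsorted : ∀ i j : Fin n, i ≤ j → v j / D j ≤ v i / D i)
    (OPT : ℝ)
    (hOPT : IsGreatest {x : ℝ | ∃ S : Finset (Fin n),
      (∑ i ∈ S, D i ≤ W) ∧ x = ∑ i ∈ S, v i} OPT) :
    OPT / 2 ≤
      max (∑ i ∈ greedySet n D W, v i)
        (Finset.univ.sup' (Finset.univ_nonempty_iff.mpr ⟨⟨0, hn⟩⟩) v) :=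
  stmt_18_general n hn v D W hv hD hsorted OPT hOPT
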